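/- arXiv:2604.03101 — 2 statements merged into one kernel-verified Lean document; each statement's English description precedes it below -/
import Mathlib

section
/- Let Γ(R) be the zero-divisor graph of R = 𝔽_p[x]/(x^{2b+1}) with b ≥ 1. The independence number of Γ(R) equals p^{2b} − p^b. -/
open Polynomial

noncomputable section

/-- The truncated polynomial ring `𝔽_p[x]/(x^c)`. -/
abbrev TPR (p c : ℕ) : Type := AdjoinRoot (X ^ c : (ZMod p)[X])

instance (p c : ℕ) [Fact p.Prime] : Finite (TPR p c) := by
  have hb : PowerBasis (ZMod p) (TPR p c) :=
    AdjoinRoot.powerBasis (pow_ne_zero c Polynomial.X_ne_zero)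
  have : Module.Finite (ZMod p) (TPR p c) := Module.Finite.of_basis hb.basis
  exact Module.finite_of_finite (ZMod p)

/-- The canonical representative (the unique representative of degree `< c`)
of an element of `𝔽_p[x]/(x^c)`. -/
def canon {p c : ℕ} (f : TPR p c) : (ZMod p)[X] :=
  Function.surjInv (AdjoinRoot.mk_surjective (g := (X ^ c : (ZMod p)[X]))) f %ₘ X ^ c

/-- The minimal degree: the least exponent with nonzero coefficient in the
canonical representative. -/
def mindeg {p c : ℕ} (f : TPR p c) : ℕ := (canon f).natTrailingDegree

/-- The set of nonzero zero-divisors of `𝔽_p[x]/(x^c)`. -/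
def zd (p c : ℕ) : Set (TPR p c) := {f | f ≠ 0 ∧ ∃ g, g ≠ 0 ∧ f * g = 0}

/-- The zero-divisor graph of `𝔽_p[x]/(x^c)`: vertices are the nonzero
zero-divisors, and `f ~ g` iff `f ≠ g` and `f * g = 0`. -/
def zdGraph (p c : ℕ) : SimpleGraph (zd p c) where
  Adj a b := a ≠ b ∧ (a : TPR p c) * (b : TPR p c) = 0
  symm := ⟨fun a b h => ⟨h.1.symm, by rw [mul_comm]; exact h.2⟩⟩
  loopless := ⟨fun a h => h.1 rfl⟩

/-! A nonzero `f ∈ 𝔽_p[x]/(x^c)` has valuation `v f = mindeg f < c`; the nonzero zero-divisors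
are the elements with `v ≥ 1`, for nonzero `f, g` one has `f g = 0 ↔ c ≤ v f + v g`, and the
elements with `v ≥ m` together with `0` form the ideal `(x^m)` of size `p^(c-m)`.

For `c = 2b+1` the `p^(2b) - p^b` elements with `1 ≤ v ≤ b` pairwise do not annihilate each
other. Conversely, if an independent set contains some `f₀` with `v f₀ = j > b`, all its other
elements satisfy `1 ≤ v < c - j`, so it has at most `p^(2b) - p^j + 1 ≤ p^(2b) - p^b` elements;
otherwise it lies inside `1 ≤ v ≤ b`. -/

namespace Polynomial

theorem X_pow_dvd_iff_le_natTrailingDegree {R : Type*} [Semiring R] {q : R[X]} {n : ℕ}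
    (hq : q ≠ 0) : X ^ n ∣ q ↔ n ≤ q.natTrailingDegree := by
  rw [X_pow_dvd_iff]
  exact ⟨le_natTrailingDegree hq,
    fun h _ hd => coeff_eq_zero_of_lt_natTrailingDegree (hd.trans_le h)⟩

theorem degree_X_pow_mul_lt_iff {R : Type*} [Semiring R] [Nontrivial R] {q : R[X]} {m c : ℕ}
    (hm : m ≤ c) : (X ^ m * q).degree < (c : WithBot ℕ) ↔ q.degree < (c - m : ℕ) := by
  rw [X_pow_mul, degree_mul_X_pow]
  cases q.degree with
  | bot => simp
  | coe d => simp only [Nat.cast_withBot, ← WithBot.coe_add, WithBot.coe_lt_coe]; omega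

end Polynomial

namespace TPR

variable {p c : ℕ}

theorem mk_canon (f : TPR p c) : AdjoinRoot.mk (X ^ c) (canon f) = f := by
  unfold canon
  rw [modByMonic_eq_sub_mul_div (Function.surjInv AdjoinRoot.mk_surjective f) (X ^ c), map_sub,
    map_mul, AdjoinRoot.mk_self, zero_mul, sub_zero, Function.surjInv_eq AdjoinRoot.mk_surjective f]

theorem canon_eq_zero_iff {f : TPR p c} : canon f = 0 ↔ f = 0 := by
  unfold canon
  rw [modByMonic_eq_zero_iff_dvd (monic_X_pow c), ← AdjoinRoot.mk_eq_zero,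
    Function.surjInv_eq AdjoinRoot.mk_surjective f]

theorem mul_eq_zero_iff_X_pow_dvd {f g : TPR p c} : f * g = 0 ↔ X ^ c ∣ canon f * canon g := by
  rw [← AdjoinRoot.mk_eq_zero, map_mul, mk_canon, mk_canon]

theorem X_pow_dvd_canon_iff {f : TPR p c} (hf : f ≠ 0) {n : ℕ} :
    X ^ n ∣ canon f ↔ n ≤ mindeg f :=
  X_pow_dvd_iff_le_natTrailingDegree (mt canon_eq_zero_iff.1 hf)

variable [Fact p.Prime]

theorem degree_canon_lt (f : TPR p c) : (canon f).degree < c := by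
  unfold canon
  simpa using degree_modByMonic_lt (Function.surjInv AdjoinRoot.mk_surjective f) (monic_X_pow c)

theorem canon_mk_of_degree_lt {q : (ZMod p)[X]} (hq : q.degree < c) :
    canon (AdjoinRoot.mk (X ^ c) q) = q := by
  have hdvd : X ^ c ∣ canon (AdjoinRoot.mk (X ^ c) q) - q := by
    rw [← AdjoinRoot.mk_eq_mk, mk_canon]
  refine sub_eq_zero.1 (eq_zero_of_dvd_of_degree_lt hdvd ?_)
  rw [degree_X_pow]
  exact (degree_sub_le _ _).trans_lt (max_lt (degree_canon_lt _) hq)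

theorem mindeg_lt {f : TPR p c} (hf : f ≠ 0) : mindeg f < c := by
  by_contra! h
  exact hf <| canon_eq_zero_iff.1 <| eq_zero_of_dvd_of_degree_lt
    ((X_pow_dvd_canon_iff hf).2 h) (by simpa using degree_canon_lt f)

theorem mul_eq_zero_iff_le_mindeg_add {f g : TPR p c} (hf : f ≠ 0) (hg : g ≠ 0) :
    f * g = 0 ↔ c ≤ mindeg f + mindeg g := by
  have hf' := mt canon_eq_zero_iff.1 hf
  have hg' := mt canon_eq_zero_iff.1 hg
  rw [mul_eq_zero_iff_X_pow_dvd, X_pow_dvd_iff_le_natTrailingDegree (mul_ne_zero hf' hg'),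
    natTrailingDegree_mul hf' hg', mindeg, mindeg]

theorem mindeg_mk_X_pow {n : ℕ} (hn : n < c) :
    mindeg (AdjoinRoot.mk (X ^ c) (X ^ n : (ZMod p)[X])) = n := by
  rw [mindeg, canon_mk_of_degree_lt (by simpa using hn), natTrailingDegree_X_pow]

theorem mem_zd_iff {f : TPR p c} : f ∈ zd p c ↔ f ≠ 0 ∧ 0 < mindeg f := by
  refine ⟨fun ⟨hf, g, hg, hfg⟩ => ⟨hf, ?_⟩, fun ⟨hf, hpos⟩ => ⟨hf, ?_⟩⟩
  · have := (mul_eq_zero_iff_le_mindeg_add hf hg).1 hfg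
    have := mindeg_lt hg
    omega
  · have hc := mindeg_lt hf
    have hx : AdjoinRoot.mk (X ^ c) (X ^ (c - 1) : (ZMod p)[X]) ≠ 0 := by
      intro h
      have := mindeg_mk_X_pow (p := p) (c := c) (n := c - 1) (by omega)
      rw [h, mindeg, canon_eq_zero_iff.2 rfl, natTrailingDegree_zero] at this
      omega
    refine ⟨_, hx, (mul_eq_zero_iff_le_mindeg_add hf hx).2 ?_⟩
    rw [mindeg_mk_X_pow (n := c - 1) (by omega)]
    omega

theorem ncard_X_pow_dvd_canon {m : ℕ} (hm : m ≤ c) :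
    {f : TPR p c | X ^ m ∣ canon f}.ncard = p ^ (c - m) := by
  set e : degreeLT (ZMod p) (c - m) → TPR p c :=
    fun q => AdjoinRoot.mk (X ^ c) (X ^ m * (q : (ZMod p)[X]))
  have hcanon (q : degreeLT (ZMod p) (c - m)) : canon (e q) = X ^ m * (q : (ZMod p)[X]) :=
    canon_mk_of_degree_lt ((degree_X_pow_mul_lt_iff hm).2 (mem_degreeLT.1 q.2))
  have he : Function.Injective e := fun q r h => Subtype.ext <|
    mul_left_cancel₀ (pow_ne_zero m X_ne_zero) (by rw [← hcanon, ← hcanon, h])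
  have hrange : {f : TPR p c | X ^ m ∣ canon f} = Set.range e := by
    ext f
    refine ⟨fun ⟨r, hr⟩ => ⟨⟨r, mem_degreeLT.2 ?_⟩, ?_⟩, ?_⟩
    · rw [← degree_X_pow_mul_lt_iff hm, ← hr]
      exact degree_canon_lt f
    · simp only [e, ← hr, mk_canon]
    · rintro ⟨q, rfl⟩
      exact ⟨q, hcanon q⟩
  rw [hrange, ← Nat.card_coe_set_eq, Nat.card_range_of_injective he,
    Nat.card_congr (degreeLTEquiv (ZMod p) (c - m)).toEquiv, Nat.card_fun, Nat.card_zmod,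
    Nat.card_eq_fintype_card, Fintype.card_fin]

def mindegIco (p c m k : ℕ) : Set (TPR p c) := {f | f ≠ 0 ∧ m ≤ mindeg f ∧ mindeg f < k}

theorem ncard_mindegIco {m k : ℕ} (hmk : m ≤ k) (hk : k ≤ c) :
    (mindegIco p c m k).ncard = p ^ (c - m) - p ^ (c - k) := by
  have hdiff : mindegIco p c m k =
      {f : TPR p c | X ^ m ∣ canon f} \ {f : TPR p c | X ^ k ∣ canon f} := by
    ext f
    rcases eq_or_ne f 0 with rfl | hf
    · simp [mindegIco, canon_eq_zero_iff.2]
    · simp [mindegIco, hf, X_pow_dvd_canon_iff hf]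
  have hsub : {f : TPR p c | X ^ k ∣ canon f} ⊆ {f | X ^ m ∣ canon f} :=
    fun f hf => (pow_dvd_pow X hmk).trans hf
  rw [hdiff, Set.ncard_sdiff hsub, ncard_X_pow_dvd_canon hk, ncard_X_pow_dvd_canon (hmk.trans hk)]

theorem mindegIco_one_subset_zd (k : ℕ) : mindegIco p c 1 k ⊆ zd p c :=
  fun _ ⟨hf, hpos, _⟩ => mem_zd_iff.2 ⟨hf, hpos⟩

theorem pairwise_mul_ne_zero_mindegIco {m k : ℕ} (hk : 2 * k ≤ c + 1) :
    (mindegIco p c m k).Pairwise fun f g => f * g ≠ 0 := by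
  rintro f ⟨hf, -, hfk⟩ g ⟨hg, -, hgk⟩ -
  rw [Ne, mul_eq_zero_iff_le_mindeg_add hf hg]
  omega

theorem ncard_le_of_pairwise_mul_ne_zero {b : ℕ} {T : Set (TPR p (2 * b + 1))}
    (hT : T ⊆ zd p (2 * b + 1)) (hind : T.Pairwise fun f g => f * g ≠ 0) :
    T.ncard ≤ p ^ (2 * b) - p ^ b := by
  by_cases h : ∃ f₀ ∈ T, b + 1 ≤ mindeg f₀
  · obtain ⟨f₀, hf₀, hbj⟩ := h
    have hf₀0 := (hT hf₀).1
    have hj := mindeg_lt hf₀0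
    have hsub : T ⊆ insert f₀ (mindegIco p (2 * b + 1) 1 (2 * b + 1 - mindeg f₀)) := by
      intro g hg
      rcases eq_or_ne g f₀ with rfl | hne
      · exact Set.mem_insert _ _
      obtain ⟨hg0, hgpos⟩ := mem_zd_iff.1 (hT hg)
      have := (mul_eq_zero_iff_le_mindeg_add hg0 hf₀0).not.1 (hind hg hf₀ hne)
      exact Or.inr ⟨hg0, hgpos, by omega⟩
    have hp := (Fact.out : p.Prime).one_lt
    have hlt : p ^ b < p ^ mindeg f₀ := Nat.pow_lt_pow_right hp (by omega)
    have hle : p ^ mindeg f₀ ≤ p ^ (2 * b) := Nat.pow_le_pow_right hp.le (by omega)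
    calc T.ncard ≤ (insert f₀ (mindegIco p (2 * b + 1) 1 (2 * b + 1 - mindeg f₀))).ncard :=
          Set.ncard_le_ncard hsub (Set.toFinite _)
      _ ≤ (mindegIco p (2 * b + 1) 1 (2 * b + 1 - mindeg f₀)).ncard + 1 :=
          Set.ncard_insert_le _ _
      _ = p ^ (2 * b) - p ^ mindeg f₀ + 1 := by
          rw [ncard_mindegIco (by omega) (by omega), Nat.sub_sub_self hj.le, Nat.add_sub_cancel]
      _ ≤ p ^ (2 * b) - p ^ b := by omega
  · push Not at h
    have hsub : T ⊆ mindegIco p (2 * b + 1) 1 (b + 1) := fun g hg =>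
      have ⟨hg0, hgpos⟩ := mem_zd_iff.1 (hT hg)
      ⟨hg0, hgpos, h g hg⟩
    calc T.ncard ≤ (mindegIco p (2 * b + 1) 1 (b + 1)).ncard :=
          Set.ncard_le_ncard hsub (Set.toFinite _)
      _ = p ^ (2 * b) - p ^ b := by
          rw [ncard_mindegIco (by omega) (by omega), Nat.add_sub_cancel,
            show 2 * b + 1 - (b + 1) = b by omega]

end TPR

open TPR

theorem forall_not_zdGraph_adj_iff {p c : ℕ} {S : Set (zd p c)} :
    (∀ u ∈ S, ∀ v ∈ S, ¬ (zdGraph p c).Adj u v) ↔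
      (Subtype.val '' S).Pairwise fun f g => f * g ≠ 0 := by
  rw [Subtype.val_injective.injOn.pairwise_image]
  simp [Set.Pairwise, zdGraph]

theorem stmt_12_general (p b : ℕ) [Fact p.Prime] :
    IsGreatest {n : ℕ | ∃ S : Set (zd p (2 * b + 1)), S.ncard = n ∧
      ∀ u ∈ S, ∀ v ∈ S, ¬ (zdGraph p (2 * b + 1)).Adj u v} (p ^ (2 * b) - p ^ b) := by
  have hsub := mindegIco_one_subset_zd (p := p) (c := 2 * b + 1) (b + 1)
  refine ⟨⟨Subtype.val ⁻¹' mindegIco p (2 * b + 1) 1 (b + 1), ?_, ?_⟩, ?_⟩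
  · rw [Set.ncard_preimage_of_injective_subset_range Subtype.val_injective (by simpa using hsub),
      ncard_mindegIco (by omega) (by omega), Nat.add_sub_cancel,
      show 2 * b + 1 - (b + 1) = b by omega]
  · rw [forall_not_zdGraph_adj_iff, Set.image_preimage_eq_of_subset (by simpa using hsub)]
    exact pairwise_mul_ne_zero_mindegIco (by omega)
  · rintro n ⟨S, rfl, hS⟩
    rw [← Set.ncard_image_of_injective S Subtype.val_injective]
    exact ncard_le_of_pairwise_mul_ne_zero (by simp) (forall_not_zdGraph_adj_iff.1 hS)

/-- The independence number of the zero-divisor graph of `𝔽_p[x]/(x^(2b+1))`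
equals `p^(2b) - p^b`. -/
theorem stmt_12 (p b : ℕ) [Fact p.Prime] (hb : 1 ≤ b) :
    IsGreatest {n : ℕ | ∃ S : Set (zd p (2 * b + 1)), S.ncard = n ∧
      ∀ u ∈ S, ∀ v ∈ S, ¬ (zdGraph p (2 * b + 1)).Adj u v} (p ^ (2 * b) - p ^ b) :=
  stmt_12_general p b
end
end

section
/- Let G = Γ(𝔽_p[x]/(x^{2b})), b ≥ 1, with the partition V_1,…,V_{2b−1} by minimal degree, and let W_i be the space of real-valued functions on V(G) supported on V_i with coordinate sum zero. Then for 1 ≤ i ≤ b−1 every nonzero vector of W_i is an eigenvector of the adjacency matrix A(G) with eigenvalue 0, and for b ≤ i ≤ 2b−1 every nonzero vector of W_i is an eigenvector of A(G) with eigenvalue −1. -/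
/-! In `𝔽_p[x]/(x^c)` two nonzero elements multiply to zero iff their minimal degrees add up to
at least `c`. So a vertex `v` is adjacent either to every vertex of `V_i` other than itself (when
`mindeg v + i ≥ c`) or to none of them, and for `x ∈ W_i` the `v`-th entry of `A x` is `-x v` or
`0` accordingly. As `x v = 0` off `V_i`, and `c = 2b ≤ 2i` exactly when `b ≤ i`, this is
`-x v` for `i ≥ b` and `0` for `i < b`. -/

open Polynomial

noncomputable section

noncomputable instance (p c : ℕ) [Fact p.Prime] : Fintype (zd p c) := Fintype.ofFinite _

open scoped Classical in
/-- The adjacency matrix of the zero-divisor graph, over `ℝ`. -/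
def adjM (p c : ℕ) : Matrix (zd p c) (zd p c) ℝ :=
  Matrix.of fun a b => if (zdGraph p c).Adj a b then 1 else 0

open scoped Classical in
/-- The diagonal degree matrix of the zero-divisor graph, over `ℝ`. -/
def degM (p c : ℕ) : Matrix (zd p c) (zd p c) ℝ :=
  Matrix.diagonal fun v => (((zdGraph p c).neighborSet v).ncard : ℝ)

open scoped Matrix

theorem Polynomial.X_pow_dvd_iff_le_natTrailingDegree_s14 {R : Type*} [Semiring R] {f : R[X]}
    (hf : f ≠ 0) {n : ℕ} : X ^ n ∣ f ↔ n ≤ f.natTrailingDegree := by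
  rw [X_pow_dvd_iff]
  exact ⟨le_natTrailingDegree hf,
    fun hn _ hd => coeff_eq_zero_of_lt_natTrailingDegree (hd.trans_le hn)⟩

namespace SimpleGraph

variable {V R : Type*} [Fintype V] (G : SimpleGraph V) [DecidableRel G.Adj] {S : Finset V}
  {x : V → R}

theorem adjMatrix_mulVec_apply_eq_zero [NonAssocSemiring R] (hsupp : Function.support x ⊆ S)
    {v : V} (hv : ∀ w ∈ S, ¬ G.Adj v w) : (G.adjMatrix R *ᵥ x) v = 0 := by
  rw [adjMatrix_mulVec_apply]
  refine Finset.sum_eq_zero fun w hw => ?_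
  by_contra hxw
  exact hv w (hsupp hxw) ((G.mem_neighborFinset v w).1 hw)

theorem adjMatrix_mulVec_apply_eq_neg [DecidableEq V] [Ring R] (hsupp : Function.support x ⊆ S)
    (hsum : ∑ w ∈ S, x w = 0) {v : V} (hv : ∀ w ∈ S, w ≠ v → G.Adj v w) :
    (G.adjMatrix R *ᵥ x) v = -x v := by
  have hsum_univ : ∑ w, x w = 0 := by
    rw [← hsum]
    exact (Finset.sum_subset (Finset.subset_univ S) fun w _ hw => by
      by_contra hxw; exact hw (hsupp hxw)).symm
  rw [adjMatrix_mulVec_apply]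
  calc ∑ w ∈ G.neighborFinset v, x w = ∑ w ∈ Finset.univ.erase v, x w := by
        refine Finset.sum_subset (fun w hw => Finset.mem_erase.2
          ⟨(G.ne_of_adj ((G.mem_neighborFinset v w).1 hw)).symm, Finset.mem_univ w⟩) ?_
        intro w hw hnw
        by_contra hxw
        exact hnw ((G.mem_neighborFinset v w).2 (hv w (hsupp hxw) (Finset.ne_of_mem_erase hw)))
    _ = -x v := by rw [Finset.sum_erase_eq_sub (Finset.mem_univ v), hsum_univ, zero_sub]

end SimpleGraph

theorem mk_canon {p c : ℕ} (f : TPR p c) : AdjoinRoot.mk (X ^ c) (canon f) = f := by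
  rw [canon, modByMonic_eq_sub_mul_div _ (X ^ c), map_sub, map_mul, AdjoinRoot.mk_self,
    zero_mul, sub_zero, Function.surjInv_eq AdjoinRoot.mk_surjective]

theorem canon_ne_zero {p c : ℕ} {f : TPR p c} (hf : f ≠ 0) : canon f ≠ 0 := by
  intro h
  exact hf (by rw [← mk_canon f, h, map_zero])

theorem mul_eq_zero_iff_le_mindeg_add {p c : ℕ} [Fact p.Prime] {f g : TPR p c}
    (hf : f ≠ 0) (hg : g ≠ 0) : f * g = 0 ↔ c ≤ mindeg f + mindeg g := by
  have hcf := canon_ne_zero hf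
  have hcg := canon_ne_zero hg
  have hfg : f * g = AdjoinRoot.mk (X ^ c) (canon f * canon g) := by
    rw [map_mul, mk_canon, mk_canon]
  rw [hfg, AdjoinRoot.mk_eq_zero,
    X_pow_dvd_iff_le_natTrailingDegree_s14 (mul_ne_zero hcf hcg), natTrailingDegree_mul hcf hcg]
  rfl

open scoped Classical in
theorem adjM_eq_adjMatrix (p c : ℕ) : adjM p c = (zdGraph p c).adjMatrix ℝ := rfl

open scoped Classical in
theorem adjM_mulVec_apply {p c : ℕ} [Fact p.Prime] (i : ℕ) {x : zd p c → ℝ}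
    (hsupp : ∀ v : zd p c, x v ≠ 0 → mindeg (v : TPR p c) = i)
    (hsum : ∑ v ∈ Finset.univ.filter (fun v : zd p c => mindeg (v : TPR p c) = i), x v = 0)
    (v : zd p c) :
    (adjM p c *ᵥ x) v = if c ≤ mindeg (v : TPR p c) + i then -x v else 0 := by
  have hsupp' : Function.support x ⊆
      ↑(Finset.univ.filter fun v : zd p c => mindeg (v : TPR p c) = i) :=
    fun w hw => by simpa using hsupp w hw
  have hadj : ∀ w : zd p c, mindeg (w : TPR p c) = i →
      ((zdGraph p c).Adj v w ↔ w ≠ v ∧ c ≤ mindeg (v : TPR p c) + i) := fun w hw => by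
    rw [← hw, ← mul_eq_zero_iff_le_mindeg_add v.2.1 w.2.1]
    exact and_congr_left' ne_comm
  rw [adjM_eq_adjMatrix]
  split_ifs with hv
  · refine (zdGraph p c).adjMatrix_mulVec_apply_eq_neg hsupp' hsum fun w hw hwv => ?_
    exact (hadj w (Finset.mem_filter.1 hw).2).2 ⟨hwv, hv⟩
  · refine (zdGraph p c).adjMatrix_mulVec_apply_eq_zero hsupp' fun w hw h => ?_
    exact hv ((hadj w (Finset.mem_filter.1 hw).2).1 h).2

open scoped Classical in
theorem stmt_14_general (p b : ℕ) [Fact p.Prime] (i : ℕ)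
    (x : zd p (2 * b) → ℝ)
    (hsupp : ∀ v : zd p (2 * b), x v ≠ 0 → mindeg (v : TPR p (2 * b)) = i)
    (hsum : ∑ v ∈ Finset.univ.filter
        (fun v : zd p (2 * b) => mindeg (v : TPR p (2 * b)) = i), x v = 0) :
    (1 ≤ i → i ≤ b - 1 → (adjM p (2 * b)).mulVec x = (0 : ℝ) • x) ∧
    (b ≤ i → i ≤ 2 * b - 1 → (adjM p (2 * b)).mulVec x = (-1 : ℝ) • x) := by
  have hx : ∀ v : zd p (2 * b), mindeg (v : TPR p (2 * b)) ≠ i → x v = 0 := fun v hv => by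
    by_contra hxv
    exact hv (hsupp v hxv)
  refine ⟨fun hi₁ hi₂ => funext fun v => ?_, fun hi _ => funext fun v => ?_⟩
  all_goals
    rw [adjM_mulVec_apply i hsupp hsum v, Pi.smul_apply, smul_eq_mul]
    split_ifs with hv
  · rw [hx v (by omega), neg_zero, zero_mul]
  · rw [zero_mul]
  · rw [neg_one_mul]
  · rw [hx v (by omega), mul_zero]

open scoped Classical in
/-- Vectors supported on `V_i` with coordinate sum zero are eigenvectors of the
adjacency matrix of `Γ(𝔽_p[x]/(x^(2b)))`, with eigenvalue `0` for `1 ≤ i ≤ b-1`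
and eigenvalue `-1` for `b ≤ i ≤ 2b-1`. -/
theorem stmt_14 (p b : ℕ) [Fact p.Prime] (hb : 1 ≤ b) (i : ℕ)
    (x : zd p (2 * b) → ℝ)
    (hsupp : ∀ v : zd p (2 * b), x v ≠ 0 → mindeg (v : TPR p (2 * b)) = i)
    (hsum : ∑ v ∈ Finset.univ.filter
        (fun v : zd p (2 * b) => mindeg (v : TPR p (2 * b)) = i), x v = 0) :
    (1 ≤ i → i ≤ b - 1 → (adjM p (2 * b)).mulVec x = (0 : ℝ) • x) ∧
    (b ≤ i → i ≤ 2 * b - 1 → (adjM p (2 * b)).mulVec x = (-1 : ℝ) • x) :=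
  stmt_14_general p b i x hsupp hsum
end
end
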